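/- arXiv:2312.03336 — 3 statements merged into one kernel-verified Lean document; each statement's English description precedes it below -/
import Mathlib

section
/- Let Σ₀ be a finite set with a fixpoint-free involution s ↦ s⁻¹, and let a symmetric, irreflexive relation [·,·]=1 ("commutation") on Σ₀ be given that additionally satisfies: s never commutes with s⁻¹, and if [s,t]=1 then [s,t⁻¹]=[s⁻¹,t]=[s⁻¹,t⁻¹]=1. Let σ : Σ₀ → Σ₀ be a bijection preserving commutation (a label-isomorphism), and let β ⊆ Σ₀ be a set of pairwise-commuting elements. Then the map τ(σ,β) := (∏_{s∈β} (σ(s⁻¹), σ(s)⁻¹)) ∘ σ, where (a,b) denotes the transposition swapping a and b, is well-defined (the transpositions involved move pairwise disjoint two-element sets, hence commute) and is again a commutation-preserving bijection of Σ₀. -/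
/-- The defining property of the permutation `τ₀` which is the product over `s ∈ β` of the
transpositions `(σ(s⁻¹), σ(s)⁻¹)`: it swaps each such pair and fixes everything else.
Then `τ(σ,β) = τ₀ ∘ σ`. -/
def IsTauProd {S : Type*} (inv : S → S) (σ : S → S) (β : Set S) (τ : Equiv.Perm S) : Prop :=
  (∀ s ∈ β, τ (σ (inv s)) = inv (σ s) ∧ τ (inv (σ s)) = σ (inv s)) ∧
  (∀ x : S, (∀ s ∈ β, x ≠ σ (inv s) ∧ x ≠ inv (σ s)) → τ x = x)

/-!
The elements `σ(s⁻¹)` and `σ(s)⁻¹` commute with exactly the same labels, since `σ` preserves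
commutation and `x` and `x⁻¹` commute with the same labels. For distinct `s, t ∈ β` we have
`[s, t] = 1`, so every element of `{σ(s⁻¹), σ(s)⁻¹}` commutes with every element of
`{σ(t⁻¹), σ(t)⁻¹}`; by irreflexivity these pairs are disjoint, and the product of the
transpositions is a well-defined permutation. As it only swaps labels with the same commutation
neighbourhood, it preserves commutation, hence so does `τ(σ, β)`.
-/

open Function

namespace Equiv.Perm

variable {α ι : Type*} {a b : ι → α} {β : Set ι} {τ τ' : Perm α}

def IsPairSwap (a b : ι → α) (β : Set ι) (τ : Perm α) : Prop :=
  (∀ s ∈ β, τ (a s) = b s ∧ τ (b s) = a s) ∧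
  (∀ x, (∀ s ∈ β, x ≠ a s ∧ x ≠ b s) → τ x = x)

theorem forall_of_forall_pairs {P : α → Prop} (ha : ∀ s ∈ β, P (a s)) (hb : ∀ s ∈ β, P (b s))
    (hoff : ∀ x, (∀ s ∈ β, x ≠ a s ∧ x ≠ b s) → P x) (x : α) : P x := by
  by_cases h : ∃ s ∈ β, x = a s ∨ x = b s
  · obtain ⟨s, hs, rfl | rfl⟩ := h
    exacts [ha s hs, hb s hs]
  · push Not at h
    exact hoff x h

theorem IsPairSwap.unique (h : IsPairSwap a b β τ) (h' : IsPairSwap a b β τ') : τ = τ' :=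
  Equiv.ext <| forall_of_forall_pairs
    (fun s hs => by rw [(h.1 s hs).1, (h'.1 s hs).1])
    (fun s hs => by rw [(h.1 s hs).2, (h'.1 s hs).2])
    (fun x hx => by rw [h.2 x hx, h'.2 x hx])

theorem exists_isPairSwap (hdisj : β.PairwiseDisjoint fun s => ({a s, b s} : Set α)) :
    ∃ τ, IsPairSwap a b β τ := by
  classical
  let f : α → α := fun x =>
    if h : ∃ s ∈ β, x ∈ ({a s, b s} : Set α) then
      if x = a h.choose then b h.choose else a h.choose
    else x
  have hf_pair : ∀ s ∈ β, ∀ x ∈ ({a s, b s} : Set α), f x = if x = a s then b s else a s := by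
    intro s hs x hx
    have h : ∃ s ∈ β, x ∈ ({a s, b s} : Set α) := ⟨s, hs, hx⟩
    have hchoose : h.choose = s := hdisj.elim_set h.choose_spec.1 hs x h.choose_spec.2 hx
    simp only [f, dif_pos h, hchoose]
  have hf_a : ∀ s ∈ β, f (a s) = b s := fun s hs => by
    simp [hf_pair s hs (a s) (by simp)]
  have hf_b : ∀ s ∈ β, f (b s) = a s := fun s hs => by
    rw [hf_pair s hs (b s) (by simp)]
    split_ifs with h
    exacts [h, rfl]
  have hf_off : ∀ x, (∀ s ∈ β, x ≠ a s ∧ x ≠ b s) → f x = x := by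
    intro x hx
    have h : ¬ ∃ s ∈ β, x ∈ ({a s, b s} : Set α) := by
      rintro ⟨s, hs, rfl | rfl⟩
      exacts [(hx s hs).1 rfl, (hx s hs).2 rfl]
    simp only [f, dif_neg h]
  have hf : Involutive f := forall_of_forall_pairs
    (fun s hs => by rw [hf_a s hs, hf_b s hs]) (fun s hs => by rw [hf_b s hs, hf_a s hs])
    (fun x hx => by rw [hf_off x hx, hf_off x hx])
  exact ⟨hf.toPerm f, fun s hs => ⟨hf_a s hs, hf_b s hs⟩, hf_off⟩

theorem existsUnique_isPairSwap (hdisj : β.PairwiseDisjoint fun s => ({a s, b s} : Set α)) :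
    ∃! τ, IsPairSwap a b β τ :=
  let ⟨τ, hτ⟩ := exists_isPairSwap hdisj
  ⟨τ, hτ, fun _ hτ' => hτ'.unique hτ⟩

variable {r : α → α → Prop}

theorem IsPairSwap.rel_apply_left_iff (h : IsPairSwap a b β τ)
    (hab : ∀ s ∈ β, ∀ x, r (a s) x ↔ r (b s) x) (y x : α) : r (τ y) x ↔ r y x :=
  forall_of_forall_pairs (P := fun y => r (τ y) x ↔ r y x)
    (fun s hs => by rw [(h.1 s hs).1, hab s hs])
    (fun s hs => by rw [(h.1 s hs).2, hab s hs])
    (fun y hy => by rw [h.2 y hy]) y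

theorem IsPairSwap.rel_apply_apply_iff (h : IsPairSwap a b β τ)
    (hab : ∀ s ∈ β, ∀ x, r (a s) x ↔ r (b s) x) (hr : ∀ x y, r x y → r y x) (y z : α) :
    r (τ y) (τ z) ↔ r y z :=
  calc r (τ y) (τ z) ↔ r y (τ z) := h.rel_apply_left_iff hab y _
    _ ↔ r (τ z) y := ⟨hr _ _, hr _ _⟩
    _ ↔ r z y := h.rel_apply_left_iff hab z y
    _ ↔ r y z := ⟨hr _ _, hr _ _⟩

end Equiv.Perm

open Equiv.Perm

section Commutation

variable {S : Type*} {inv σ : S → S} {r : S → S → Prop}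

theorem isTauProd_iff_isPairSwap {β : Set S} {τ : Equiv.Perm S} :
    IsTauProd inv σ β τ ↔ IsPairSwap (σ ∘ inv) (inv ∘ σ) β τ :=
  Iff.rfl

theorem rel_inv_left_iff (hinv : Involutive inv) (hl : ∀ s t, r s t → r (inv s) t) (s t : S) :
    r (inv s) t ↔ r s t :=
  ⟨fun h => hinv s ▸ hl _ _ h, hl s t⟩

theorem rel_map_inv_iff_rel_inv_map (hinv : Involutive inv) (hl : ∀ s t, r s t → r (inv s) t)
    (hσ : Surjective σ) (hσr : ∀ s t, r s t ↔ r (σ s) (σ t)) (s x : S) :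
    r (σ (inv s)) x ↔ r (inv (σ s)) x := by
  obtain ⟨y, rfl⟩ := hσ x
  rw [rel_inv_left_iff hinv hl, ← hσr, ← hσr, rel_inv_left_iff hinv hl]

theorem pairwiseDisjoint_map_inv_pairs (hinv : Involutive inv) (hsymm : ∀ x y, r x y → r y x)
    (hirr : ∀ x, ¬ r x x) (hl : ∀ s t, r s t → r (inv s) t) (hσ : Surjective σ)
    (hσr : ∀ s t, r s t ↔ r (σ s) (σ t)) {β : Set S} (hβ : β.Pairwise r) :
    β.PairwiseDisjoint fun s => ({σ (inv s), inv (σ s)} : Set S) := by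
  have hsymm' : ∀ x y, r x y ↔ r y x := fun x y => ⟨hsymm x y, hsymm y x⟩
  have hpair : ∀ s x y, x ∈ ({σ (inv s), inv (σ s)} : Set S) → (r x y ↔ r (σ (inv s)) y) := by
    rintro s x y (rfl | rfl)
    · rfl
    · exact (rel_map_inv_iff_rel_inv_map hinv hl hσ hσr s y).symm
  intro s hs t ht hst
  refine Set.disjoint_left.2 fun x hxs hxt => hirr x ?_
  rw [hpair s x x hxs, hsymm', hpair t x _ hxt, ← hσr, rel_inv_left_iff hinv hl, hsymm',
    rel_inv_left_iff hinv hl]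
  exact hβ hs ht hst

end Commutation

theorem tau_well_defined_and_label_iso_general {S : Type*}
    (inv : S → S) (hinv : ∀ s, inv (inv s) = s)
    (comm : S → S → Prop)
    (hsymm : ∀ s t, comm s t → comm t s) (hirr : ∀ s, ¬ comm s s)
    (hcompat : ∀ s t, comm s t → comm s (inv t) ∧ comm (inv s) t ∧ comm (inv s) (inv t))
    (σ : S → S) (hσ : Function.Bijective σ)
    (hσcomm : ∀ s t, comm s t ↔ comm (σ s) (σ t))
    (β : Set S) (hβ : ∀ s ∈ β, ∀ t ∈ β, s ≠ t → comm s t) :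
    (∃! τ : Equiv.Perm S, IsTauProd inv σ β τ) ∧
    (∀ τ : Equiv.Perm S, IsTauProd inv σ β τ →
      Function.Bijective (fun t => τ (σ t)) ∧
      ∀ s t, comm s t ↔ comm (τ (σ s)) (τ (σ t))) := by
  simp only [isTauProd_iff_isPairSwap]
  have hl : ∀ s t, comm s t → comm (inv s) t := fun s t h => (hcompat s t h).2.1
  refine ⟨existsUnique_isPairSwap
    (pairwiseDisjoint_map_inv_pairs hinv hsymm hirr hl hσ.2 hσcomm hβ), fun τ hτ => ?_⟩
  have hsame : ∀ s ∈ β, ∀ x, comm (σ (inv s)) x ↔ comm (inv (σ s)) x :=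
    fun s _ => rel_map_inv_iff_rel_inv_map hinv hl hσ.2 hσcomm s
  exact ⟨τ.bijective.comp hσ,
    fun s t => (hσcomm s t).trans (hτ.rel_apply_apply_iff hsame hsymm _ _).symm⟩

/-- `τ(σ,β)` is well-defined (there is a unique permutation realizing the product of
the disjoint transpositions) and `τ(σ,β)` is again a commutation-preserving bijection of `Σ₀`. -/
theorem tau_well_defined_and_label_iso {S : Type*} [Fintype S] [DecidableEq S]
    (inv : S → S) (hinv : ∀ s, inv (inv s) = s) (hfpf : ∀ s, inv s ≠ s)
    (comm : S → S → Prop)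
    (hsymm : ∀ s t, comm s t → comm t s) (hirr : ∀ s, ¬ comm s s)
    (hinvcomm : ∀ s, ¬ comm s (inv s))
    (hcompat : ∀ s t, comm s t → comm s (inv t) ∧ comm (inv s) t ∧ comm (inv s) (inv t))
    (σ : S → S) (hσ : Function.Bijective σ)
    (hσcomm : ∀ s t, comm s t ↔ comm (σ s) (σ t))
    (β : Set S) (hβ : ∀ s ∈ β, ∀ t ∈ β, s ≠ t → comm s t) :
    (∃! τ : Equiv.Perm S, IsTauProd inv σ β τ) ∧
    (∀ τ : Equiv.Perm S, IsTauProd inv σ β τ →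
      Function.Bijective (fun t => τ (σ t)) ∧
      ∀ s t, comm s t ↔ comm (τ (σ s)) (τ (σ t))) :=
  tau_well_defined_and_label_iso_general inv hinv comm hsymm hirr hcompat σ hσ hσcomm β hβ
end

section
/- With Σ₀, commutation, and τ as above: let σ, σ̃ be label-isomorphisms, β, β̃ ⊆ Σ₀ sets of pairwise commuting elements (possibly empty), and s ∈ Σ₀ such that (i) β̃ = β or β̃ = β ∪ {s}, (ii) every element of β commutes with s (or β is empty), and (iii) σ(t) = σ̃(t) for every t ∈ Σ₀ commuting with s. Then τ(σ,β)(t) = τ(σ̃,β̃)(t) for every t ∈ Σ₀ that commutes with s. -/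
section

variable {S : Type*} {inv : S → S}

theorem apply_ne_of_comm {comm : S → S → Prop} (hsymm : ∀ s t, comm s t → comm t s)
    (hinvcomm : ∀ s, ¬ comm s (inv s)) {σ : S → S}
    (hσcomm : ∀ s t, comm s t ↔ comm (σ s) (σ t)) {s t : S} (ht : comm t s) :
    σ t ≠ σ (inv s) ∧ σ t ≠ inv (σ s) := by
  have hσt : comm (σ t) (σ s) := (hσcomm t s).mp ht
  constructor
  · intro h
    rw [h, ← hσcomm] at hσt
    exact hinvcomm s (hsymm _ _ hσt)
  · intro h
    rw [h] at hσt
    exact hinvcomm (σ s) (hsymm _ _ hσt)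

theorem IsTauProd.apply_eq_of_subset {σ σ' : S → S} {β β' : Set S} {τ τ' : Equiv.Perm S}
    (hτ : IsTauProd inv σ β τ) (hτ' : IsTauProd inv σ' β' τ') (hsub : β ⊆ β')
    (hσσ' : ∀ r ∈ β, σ (inv r) = σ' (inv r) ∧ σ r = σ' r) {x : S}
    (hx : ∀ r ∈ β' \ β, x ≠ σ' (inv r) ∧ x ≠ inv (σ' r)) : τ x = τ' x := by
  by_cases hmoved : ∃ r ∈ β, x = σ (inv r) ∨ x = inv (σ r)
  · obtain ⟨r, hr, hxr | hxr⟩ := hmoved <;> obtain ⟨hinvr, hr'⟩ := hσσ' r hr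
    · rw [hxr, (hτ.1 r hr).1, hinvr, (hτ'.1 r (hsub hr)).1, hr']
    · rw [hxr, (hτ.1 r hr).2, hr', (hτ'.1 r (hsub hr)).2, hinvr]
  · push Not at hmoved
    rw [hτ.2 x hmoved, hτ'.2 x fun r hr => ?_]
    by_cases hrβ : r ∈ β
    · obtain ⟨hinvr, hr'⟩ := hσσ' r hrβ
      rw [← hinvr, ← hr']
      exact hmoved r hrβ
    · exact hx r ⟨hr, hrβ⟩

end

theorem tau_agree_on_commuting_general {S : Type*}
    (inv : S → S)
    (comm : S → S → Prop)
    (hsymm : ∀ s t, comm s t → comm t s)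
    (hinvcomm : ∀ s, ¬ comm s (inv s))
    (hcompat : ∀ s t, comm s t → comm s (inv t) ∧ comm (inv s) t ∧ comm (inv s) (inv t))
    (σ σ' : S → S)
    (hσ'comm : ∀ s t, comm s t ↔ comm (σ' s) (σ' t))
    (β β' : Set S)
    (s : S)
    (hββ' : β' = β ∨ β' = β ∪ {s})
    (hβs : ∀ r ∈ β, comm r s)
    (hagree : ∀ t : S, comm t s → σ t = σ' t) :
    ∀ τ τ' : Equiv.Perm S, IsTauProd inv σ β τ → IsTauProd inv σ' β' τ' →
      ∀ t : S, comm t s → τ (σ t) = τ' (σ' t) := by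
  intro τ τ' hτ hτ' t ht
  have hsub : β ⊆ β' := by
    rcases hββ' with rfl | rfl
    exacts [subset_rfl, Set.subset_union_left]
  have hsup : β' ⊆ β ∪ {s} := by
    rcases hββ' with rfl | rfl
    exacts [Set.subset_union_left, subset_rfl]
  rw [hagree t ht]
  refine hτ.apply_eq_of_subset hτ' hsub
    (fun r hr => ⟨hagree _ (hcompat r s (hβs r hr)).2.1, hagree r (hβs r hr)⟩) fun r hr => ?_
  obtain rfl : r = s := (hsup hr.1).resolve_left hr.2
  exact apply_ne_of_comm hsymm hinvcomm hσ'comm ht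

/-- if `β̃ = β` or `β̃ = β ∪ {s}`, all elements of `β` commute with `s`, and
`σ` agrees with `σ̃` on every element commuting with `s`, then `τ(σ,β)` agrees with
`τ(σ̃,β̃)` on every element commuting with `s`. -/
theorem tau_agree_on_commuting {S : Type*} [Fintype S] [DecidableEq S]
    (inv : S → S) (hinv : ∀ s, inv (inv s) = s) (hfpf : ∀ s, inv s ≠ s)
    (comm : S → S → Prop)
    (hsymm : ∀ s t, comm s t → comm t s) (hirr : ∀ s, ¬ comm s s)
    (hinvcomm : ∀ s, ¬ comm s (inv s))
    (hcompat : ∀ s t, comm s t → comm s (inv t) ∧ comm (inv s) t ∧ comm (inv s) (inv t))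
    (σ σ' : S → S) (hσ : Function.Bijective σ) (hσ' : Function.Bijective σ')
    (hσcomm : ∀ s t, comm s t ↔ comm (σ s) (σ t))
    (hσ'comm : ∀ s t, comm s t ↔ comm (σ' s) (σ' t))
    (β β' : Set S)
    (hβ : ∀ x ∈ β, ∀ y ∈ β, x ≠ y → comm x y)
    (hβ' : ∀ x ∈ β', ∀ y ∈ β', x ≠ y → comm x y)
    (s : S)
    (hββ' : β' = β ∨ β' = β ∪ {s})
    (hβs : ∀ r ∈ β, comm r s)
    (hagree : ∀ t : S, comm t s → σ t = σ' t) :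
    ∀ τ τ' : Equiv.Perm S, IsTauProd inv σ β τ → IsTauProd inv σ' β' τ' →
      ∀ t : S, comm t s → τ (σ t) = τ' (σ' t) :=
  tau_agree_on_commuting_general inv comm hsymm hinvcomm hcompat σ σ' hσ'comm β β' s hββ' hβs hagree
end

section
/- Let G be a group acting transitively on a set S, let H be a normal subgroup of G, and let o ∈ S. If the set of H-orbits on S is finite and the stabilizer Stab_H(o) = H ∩ Stab_G(o) has finite index in Stab_G(o), then H has finite index in G. -/
open Pointwise

/-- Lemma 5.1 of Lazarovich: if `G` acts transitively on `S`, `H ◁ G`,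
the `H`-orbit space of `S` is finite, and `Stab_H(o)` has finite index in `Stab_G(o)`,
then `H` has finite index in `G`. -/
theorem finite_index_of_finite_orbits {G : Type*} [Group G] {S : Type*} [MulAction G S]
    (htrans : MulAction.IsPretransitive G S)
    (H : Subgroup G) (hH : H.Normal) (o : S)
    (horb : Finite (MulAction.orbitRel.Quotient H S))
    (hstab : (H.subgroupOf (MulAction.stabilizer G o)).FiniteIndex) :
    H.FiniteIndex := by
  haveI := hH
  set K : Subgroup G := H ⊔ MulAction.stabilizer G o with hK
  have hHK : H ≤ K := le_sup_left
  have hwd : ∀ g g' : G, g⁻¹ * g' ∈ K →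
      (Quotient.mk'' (g • o) : MulAction.orbitRel.Quotient H S) = Quotient.mk'' (g' • o) := by
    intro g g' hm
    have hmem : g⁻¹ * g' ∈ (H : Set G) * (MulAction.stabilizer G o : Set G) := by
      rw [← Subgroup.normal_mul]; exact hm
    obtain ⟨h, hh, s, hs, hprod⟩ := hmem
    have hprod' : h * s = g⁻¹ * g' := hprod
    have hg' : g' = g * (h * s) := by rw [hprod']; group
    have hso : s • o = o := hs
    apply Quotient.sound
    refine ⟨⟨g * h⁻¹ * g⁻¹, hH.conj_mem h⁻¹ (inv_mem hh) g⟩, ?_⟩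
    show (g * h⁻¹ * g⁻¹) • g' • o = g • o
    rw [hg']
    simp [mul_smul, hso]
  have hinj : Function.Injective
      (fun x : G ⧸ K => Quotient.liftOn' x
        (fun g => (Quotient.mk'' (g • o) : MulAction.orbitRel.Quotient H S))
        (fun g g' hr => hwd g g' (QuotientGroup.leftRel_apply.mp hr))) := by
    intro x y
    induction x using Quotient.inductionOn'
    induction y using Quotient.inductionOn'
    rename_i g g'
    intro hxy
    simp only [Quotient.liftOn'_mk''] at hxy
    obtain ⟨⟨h, hh⟩, hho⟩ := Quotient.exact' hxy
    apply Quotient.sound'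
    rw [QuotientGroup.leftRel_apply]
    have hho' : h • g' • o = g • o := hho
    have hs : g⁻¹ * h * g' ∈ MulAction.stabilizer G o := by
      show (g⁻¹ * h * g') • o = o
      rw [mul_smul, mul_smul, hho', ← mul_smul, inv_mul_cancel, one_smul]
    have hmem : g⁻¹ * g' ∈ (H : Set G) * (MulAction.stabilizer G o : Set G) :=
      ⟨g⁻¹ * h⁻¹ * g, hH.conj_mem' h⁻¹ (inv_mem hh) g, g⁻¹ * h * g', hs, by group⟩
    rw [← Subgroup.normal_mul] at hmem
    exact hmem
  haveI : Finite (G ⧸ K) := Finite.of_injective _ hinj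
  have hKidx : K.index ≠ 0 := Subgroup.index_ne_zero_of_finite
  have hrel : H.relIndex K ≠ 0 := by
    rw [hK, Subgroup.relIndex_sup_left]
    exact hstab.index_ne_zero
  refine ⟨?_⟩
  rw [← Subgroup.relIndex_mul_index hHK]
  exact mul_ne_zero hrel hKidx
end
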